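/- The van Albada limiter satisfies ψ(a,a) = a for all a ≠ 0, and |ψ(a,b)| ≤ ((1+√2)/2)·min(|a|,|b|) for all (a,b) with a² + b² ≠ 0. -/

import Mathlib

noncomputable def vanAlbada (a b : ℝ) : ℝ := (a ^ 2 * b + a * b ^ 2) / (a ^ 2 + b ^ 2)

/- Writing `ψ(a, b) = a · b (a + b) / (a² + b²)`, the bound reduces to `|b (a + b)| ≤ c (a² + b²)`
with `c = (1 + √2) / 2`, the largest eigenvalue of the quadratic form `b (a + b)`; symmetry of `ψ`
then gives the bound by `c |b|` as well. At `a = b = 0` both sides vanish, since `0 / 0 = 0`. -/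

theorem vanAlbada_self {a : ℝ} (ha : a ≠ 0) : vanAlbada a a = a := by
  unfold vanAlbada
  field_simp

theorem vanAlbada_comm (a b : ℝ) : vanAlbada a b = vanAlbada b a := by
  unfold vanAlbada
  ring

theorem abs_mul_add_le_sq_add_sq (a b : ℝ) :
    |b * (a + b)| ≤ (1 + √2) / 2 * (a ^ 2 + b ^ 2) := by
  have hs : √2 ^ 2 = 2 := Real.sq_sqrt (by norm_num)
  rw [abs_le]
  constructor
  · nlinarith [sq_nonneg (b + (1 + √2) * a), sq_nonneg a, Real.sqrt_nonneg 2]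
  · -- the difference is `(1 + √2) / 2 * (a - (√2 - 1) * b) ^ 2`
    nlinarith [sq_nonneg (b - (1 + √2) * a), Real.sqrt_nonneg 2]

theorem abs_vanAlbada_le_left (a b : ℝ) : |vanAlbada a b| ≤ (1 + √2) / 2 * |a| := by
  rw [vanAlbada, abs_div, abs_of_nonneg (by positivity : (0 : ℝ) ≤ a ^ 2 + b ^ 2)]
  refine div_le_of_le_mul₀ (by positivity) (by positivity) ?_
  calc |a ^ 2 * b + a * b ^ 2| = |a| * |b * (a + b)| := by rw [← abs_mul]; ring_nf
    _ ≤ |a| * ((1 + √2) / 2 * (a ^ 2 + b ^ 2)) := by gcongr; exact abs_mul_add_le_sq_add_sq a b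
    _ = (1 + √2) / 2 * |a| * (a ^ 2 + b ^ 2) := by ring

theorem abs_vanAlbada_le_min (a b : ℝ) : |vanAlbada a b| ≤ (1 + √2) / 2 * min |a| |b| := by
  rw [mul_min_of_nonneg _ _ (by positivity)]
  exact le_min (abs_vanAlbada_le_left a b) (vanAlbada_comm a b ▸ abs_vanAlbada_le_left b a)

theorem vanAlbada_diag_and_bound :
    (∀ a : ℝ, a ≠ 0 → vanAlbada a a = a) ∧
    (∀ a b : ℝ, a ^ 2 + b ^ 2 ≠ 0 →
      |vanAlbada a b| ≤ (1 + Real.sqrt 2) / 2 * min |a| |b|) :=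
  ⟨fun _ ha => vanAlbada_self ha, fun a b _ => abs_vanAlbada_le_min a b⟩
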